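/- arXiv:1309.5406 — 2 statements merged into one kernel-verified Lean document; each statement's English description precedes it below -/
import Mathlib

section
/- Stable point condition with noise: Let b = A x* + e where x* is k-sparse with support Λ, and suppose A_Γ^T A_Γ is invertible for every index set Γ of size k. Fix α̲ > 0 and an index set Γ of size k with Γ ≠ Λ. If there exists x̄ with supp(x̄) ⊆ Γ satisfying (A^T(b − A x̄))_Γ = 0 and min_{i∈Γ} |x̄_i| ≥ α̲ · max_{j∈Γ^C} |(A^T(b − A x̄))_j|, then ‖A_Γ^† A_{Λ∖Γ} x*_{Λ∖Γ}‖ + ‖A_Γ^† e‖ ≥ α̲ ( ‖A_{Λ∖Γ}^T (I − A_Γ A_Γ^†) A_{Λ∖Γ} x*_{Λ∖Γ}‖ − ‖A_{Λ∖Γ}^T (I − A_Γ A_Γ^†) e‖ ). -/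
/-!
Put `δ = x̄_Γ − x*_Γ` and `s = A_{Λ∖Γ} x*_{Λ∖Γ} + e`, so that `b = A_Γ x*_Γ + s`. The gradient
condition makes `x̄_Γ` the least-squares solution on `Γ`, i.e. `A_Γ^† b = x̄_Γ`; hence
`A_Γ^† s = δ` and `(I − A_Γ A_Γ^†) s = b − A x̄`. By the triangle inequality the left side of the
claim is at least `‖δ‖` and the right side at most `α̲ ‖(Aᵀ(b − A x̄))_{Λ∖Γ}‖`. As
`|Λ∖Γ| = |Γ∖Λ|` and `δ = x̄` on `Γ∖Λ`, the stability condition matches each entry of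
`α̲ (Aᵀ(b − A x̄))_{Λ∖Γ}` with a distinct entry of `δ` of at least the same size.
-/

open scoped Classical
open Finset Matrix

/-- Euclidean norm of a finitely indexed real vector. -/
noncomputable def euclNorm {m : Type*} [Fintype m] (x : m → ℝ) : ℝ :=
  Real.sqrt (∑ i, (x i) ^ 2)

/-- The column submatrix of `A` indexed by the finset `Γ`. -/
def colSub {n N : ℕ} (A : Matrix (Fin n) (Fin N) ℝ) (Γ : Finset (Fin N)) :
    Matrix (Fin n) Γ ℝ := fun i j => A i j.1

/-- The Moore–Penrose pseudoinverse `A_Γ^† = (A_Γᵀ A_Γ)⁻¹ A_Γᵀ`. -/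
noncomputable def pinv {n N : ℕ} (A : Matrix (Fin n) (Fin N) ℝ) (Γ : Finset (Fin N)) :
    Matrix Γ (Fin n) ℝ := ((colSub A Γ)ᵀ * colSub A Γ)⁻¹ * (colSub A Γ)ᵀ

lemma euclNorm_eq_norm_toLp {m : Type*} [Fintype m] (x : m → ℝ) :
    euclNorm x = ‖WithLp.toLp 2 x‖ := by
  simp [euclNorm, EuclideanSpace.norm_eq, sq_abs]

lemma euclNorm_add_le {m : Type*} [Fintype m] (x y : m → ℝ) :
    euclNorm (x + y) ≤ euclNorm x + euclNorm y := by
  simpa only [euclNorm_eq_norm_toLp, WithLp.toLp_add] using norm_add_le _ _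

lemma euclNorm_sub_le_euclNorm_add {m : Type*} [Fintype m] (x y : m → ℝ) :
    euclNorm x - euclNorm y ≤ euclNorm (x + y) := by
  simp only [euclNorm_eq_norm_toLp, WithLp.toLp_add]
  simpa only [norm_neg, sub_neg_eq_add] using
    norm_sub_norm_le (WithLp.toLp 2 x) (-WithLp.toLp 2 y)

lemma euclNorm_restrict_le_of_subset {ι : Type*} {S T : Finset ι} (hST : S ⊆ T) (x : ι → ℝ) :
    euclNorm (fun i : S => x i) ≤ euclNorm (fun i : T => x i) := by
  unfold euclNorm
  gcongr
  rw [sum_coe_sort S fun i => x i ^ 2, sum_coe_sort T fun i => x i ^ 2]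
  exact sum_le_sum_of_subset_of_nonneg hST fun i _ _ => sq_nonneg _

lemma mul_euclNorm_restrict_le {ι : Type*} {S T : Finset ι} (hcard : T.card ≤ S.card)
    {α : ℝ} (hα : 0 ≤ α) (g d : ι → ℝ) (h : ∀ i ∈ S, ∀ j ∈ T, α * |g j| ≤ |d i|) :
    α * euclNorm (fun j : T => g j) ≤ euclNorm (fun i : S => d i) := by
  obtain ⟨φ⟩ : Nonempty (T ↪ S) :=
    Function.Embedding.nonempty_of_card_le (by simpa using hcard)
  have hpair (j : T) : (α * g j) ^ 2 ≤ d (φ j) ^ 2 :=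
    calc (α * g j) ^ 2 = (α * |g j|) ^ 2 := by rw [mul_pow, mul_pow, sq_abs]
      _ ≤ |d (φ j)| ^ 2 := pow_le_pow_left₀ (by positivity) (h _ (φ j).2 _ j.2) 2
      _ = d (φ j) ^ 2 := sq_abs _
  calc α * euclNorm (fun j : T => g j)
      = Real.sqrt (∑ j : T, (α * g j) ^ 2) := by
        simp only [euclNorm, mul_pow, ← mul_sum, Real.sqrt_mul (sq_nonneg α),
          Real.sqrt_sq hα]
    _ ≤ Real.sqrt (∑ j : T, d (φ j) ^ 2) := Real.sqrt_le_sqrt (sum_le_sum fun j _ => hpair j)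
    _ ≤ euclNorm (fun i : S => d i) := by
        refine Real.sqrt_le_sqrt ?_
        rw [← sum_map univ φ fun i => d i ^ 2]
        exact sum_le_sum_of_subset_of_nonneg (subset_univ _) fun i _ _ => sq_nonneg _

section Projection

variable {R m κ : Type*} [CommRing R] [Fintype m] [Fintype κ] [DecidableEq κ]
  {P : Matrix m κ R} {M : Matrix κ m R}

lemma mulVec_eq_sub_of_mul_eq_one (hMP : M * P = 1) {b s : m → R} {x y : κ → R}
    (hb : b = P *ᵥ x + s) (hy : M *ᵥ b = y) : M *ᵥ s = y - x := by
  rw [← hy, hb, mulVec_add, mulVec_mulVec, hMP, one_mulVec, add_sub_cancel_left]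

variable [DecidableEq m] in
lemma one_sub_mul_mulVec_eq_of_mul_eq_one (hMP : M * P = 1) {b s : m → R} {x y : κ → R}
    (hb : b = P *ᵥ x + s) (hy : M *ᵥ b = y) : (1 - P * M) *ᵥ s = b - P *ᵥ y := by
  have hannih : (1 - P * M) * P = 0 := by
    rw [Matrix.sub_mul, Matrix.mul_assoc, hMP, Matrix.mul_one, Matrix.one_mul, sub_self]
  have hs : s = b - P *ᵥ x := by rw [hb, add_sub_cancel_left]
  rw [hs, mulVec_sub, mulVec_mulVec, hannih, zero_mulVec, sub_zero, Matrix.sub_mulVec,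
    one_mulVec, ← mulVec_mulVec, hy]

end Projection

section ColumnSubmatrix

variable {n N : ℕ} (A : Matrix (Fin n) (Fin N) ℝ)

lemma colSub_mulVec_apply (S : Finset (Fin N)) (x : Fin N → ℝ) (i : Fin n) :
    (colSub A S *ᵥ fun j : S => x j) i = ∑ j ∈ S, A i j * x j :=
  sum_coe_sort S fun j => A i j * x j

lemma colSub_transpose_mulVec (S : Finset (Fin N)) (r : Fin n → ℝ) :
    (colSub A S)ᵀ *ᵥ r = fun j : S => (Aᵀ *ᵥ r) j := rfl

lemma mulVec_eq_colSub_mulVec {S : Finset (Fin N)} {x : Fin N → ℝ} (hx : ∀ j ∉ S, x j = 0) :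
    A *ᵥ x = colSub A S *ᵥ fun j : S => x j := by
  ext i
  rw [colSub_mulVec_apply]
  refine (sum_subset (subset_univ S) fun j _ hj => ?_).symm
  simp [hx j hj]

lemma mulVec_eq_colSub_add_colSub {S T : Finset (Fin N)} (hST : Disjoint S T) {x : Fin N → ℝ}
    (hx : ∀ j ∉ S ∪ T, x j = 0) :
    A *ᵥ x = (colSub A S *ᵥ fun j : S => x j) + colSub A T *ᵥ fun j : T => x j := by
  ext i
  rw [Pi.add_apply, colSub_mulVec_apply, colSub_mulVec_apply, ← sum_union hST]
  refine (sum_subset (subset_univ (S ∪ T)) fun j _ hj => ?_).symm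
  simp [hx j hj]

lemma pinv_mul_colSub {S : Finset (Fin N)} (h : IsUnit ((colSub A S)ᵀ * colSub A S)) :
    pinv A S * colSub A S = 1 := by
  rw [pinv, Matrix.mul_assoc, nonsing_inv_mul _ ((isUnit_iff_isUnit_det _).mp h)]

lemma pinv_mulVec_eq_of_transpose_mulVec_sub_eq_zero {S : Finset (Fin N)}
    (h : IsUnit ((colSub A S)ᵀ * colSub A S)) {b : Fin n → ℝ} {y : S → ℝ}
    (hy : (colSub A S)ᵀ *ᵥ (b - colSub A S *ᵥ y) = 0) : pinv A S *ᵥ b = y := by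
  have hres : pinv A S *ᵥ (b - colSub A S *ᵥ y) = 0 := by
    rw [pinv, ← mulVec_mulVec, hy, mulVec_zero]
  rwa [mulVec_sub, mulVec_mulVec, pinv_mul_colSub A h, one_mulVec, sub_eq_zero] at hres

end ColumnSubmatrix

theorem stable_point_condition_noise_general {n N k : ℕ}
    (A : Matrix (Fin n) (Fin N) ℝ) (e : Fin n → ℝ) (xstar : Fin N → ℝ)
    (Λ : Finset (Fin N)) (hΛ : ∀ i, xstar i ≠ 0 ↔ i ∈ Λ) (hΛcard : Λ.card = k)
    (hinv : ∀ Γ : Finset (Fin N), Γ.card = k → IsUnit ((colSub A Γ)ᵀ * colSub A Γ))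
    (αl : ℝ) (hαl : 0 < αl)
    (Γ : Finset (Fin N)) (hΓcard : Γ.card = k)
    (b : Fin n → ℝ) (hb : b = A.mulVec xstar + e)
    (xb : Fin N → ℝ) (hsupp : ∀ i ∉ Γ, xb i = 0)
    (hgrad : ∀ i ∈ Γ, (Aᵀ.mulVec (b - A.mulVec xb)) i = 0)
    (hmin : ∀ i ∈ Γ, ∀ j ∉ Γ, αl * |(Aᵀ.mulVec (b - A.mulVec xb)) j| ≤ |xb i|) :
    euclNorm ((pinv A Γ * colSub A (Λ \ Γ)).mulVec fun j : ↥(Λ \ Γ) => xstar j.1)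
        + euclNorm ((pinv A Γ).mulVec e)
      ≥ αl * (euclNorm (((colSub A (Λ \ Γ))ᵀ * (1 - colSub A Γ * pinv A Γ)
              * colSub A (Λ \ Γ)).mulVec fun j : ↥(Λ \ Γ) => xstar j.1)
          - euclNorm (((colSub A (Λ \ Γ))ᵀ
              * (1 - colSub A Γ * pinv A Γ)).mulVec e)) := by
  set P := colSub A Γ
  set D := colSub A (Λ \ Γ)
  set s := (D *ᵥ fun j : ↥(Λ \ Γ) => xstar j) + e
  have hMP : pinv A Γ * P = 1 := pinv_mul_colSub A (hinv Γ hΓcard)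
  have hxstar (j : Fin N) (hj : j ∉ Λ) : xstar j = 0 := not_not.mp fun h => hj ((hΛ j).mp h)
  have hbs : b = (P *ᵥ fun j : Γ => xstar j) + s := by
    rw [hb, mulVec_eq_colSub_add_colSub A (S := Γ) (T := Λ \ Γ) disjoint_sdiff fun j hj =>
      hxstar j fun hjΛ => hj (by simp [hjΛ]), add_assoc]
  have hAxb : A *ᵥ xb = P *ᵥ fun j : Γ => xb j := mulVec_eq_colSub_mulVec A hsupp
  have hls : pinv A Γ *ᵥ b = fun j : Γ => xb j :=
    pinv_mulVec_eq_of_transpose_mulVec_sub_eq_zero A (hinv Γ hΓcard)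
      (by rw [← hAxb, colSub_transpose_mulVec]; exact funext fun j => hgrad j j.2)
  have hstable : αl * euclNorm (fun j : ↥(Λ \ Γ) => (Aᵀ *ᵥ (b - A *ᵥ xb)) j)
      ≤ euclNorm (fun j : Γ => xb j - xstar j) := by
    refine (mul_euclNorm_restrict_le (card_sdiff_comm (hΛcard.trans hΓcard.symm)).le hαl.le _
      (xb - xstar) fun i hi j hj => ?_).trans (euclNorm_restrict_le_of_subset sdiff_subset _)
    simpa [hxstar i (mem_sdiff.mp hi).2] using hmin i (mem_sdiff.mp hi).1 j (mem_sdiff.mp hj).2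
  calc αl * (euclNorm ((Dᵀ * (1 - P * pinv A Γ) * D) *ᵥ fun j : ↥(Λ \ Γ) => xstar j)
        - euclNorm ((Dᵀ * (1 - P * pinv A Γ)) *ᵥ e))
      ≤ αl * euclNorm (Dᵀ *ᵥ ((1 - P * pinv A Γ) *ᵥ s)) := by
        refine mul_le_mul_of_nonneg_left ?_ hαl.le
        simp only [s, mulVec_add, mulVec_mulVec, Matrix.mul_assoc]
        exact euclNorm_sub_le_euclNorm_add _ _
    _ ≤ euclNorm (fun j : Γ => xb j - xstar j) := by
        rwa [one_sub_mul_mulVec_eq_of_mul_eq_one hMP hbs hls, ← hAxb]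
    _ = euclNorm (pinv A Γ *ᵥ s) := by
        rw [mulVec_eq_sub_of_mul_eq_one hMP hbs hls]; rfl
    _ ≤ _ := by
        simp only [s, mulVec_add, mulVec_mulVec]
        exact euclNorm_add_le _ _

/-- stable point condition in the presence of noise. -/
theorem stable_point_condition_noise {n N k : ℕ}
    (A : Matrix (Fin n) (Fin N) ℝ) (e : Fin n → ℝ) (xstar : Fin N → ℝ)
    (Λ : Finset (Fin N)) (hΛ : ∀ i, xstar i ≠ 0 ↔ i ∈ Λ) (hΛcard : Λ.card = k)
    (hinv : ∀ Γ : Finset (Fin N), Γ.card = k → IsUnit ((colSub A Γ)ᵀ * colSub A Γ))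
    (αl : ℝ) (hαl : 0 < αl)
    (Γ : Finset (Fin N)) (hΓcard : Γ.card = k) (hne : Γ ≠ Λ)
    (b : Fin n → ℝ) (hb : b = A.mulVec xstar + e)
    (xb : Fin N → ℝ) (hsupp : ∀ i ∉ Γ, xb i = 0)
    (hgrad : ∀ i ∈ Γ, (Aᵀ.mulVec (b - A.mulVec xb)) i = 0)
    (hmin : ∀ i ∈ Γ, ∀ j ∉ Γ, αl * |(Aᵀ.mulVec (b - A.mulVec xb)) j| ≤ |xb i|) :
    euclNorm ((pinv A Γ * colSub A (Λ \ Γ)).mulVec fun j : ↥(Λ \ Γ) => xstar j.1)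
        + euclNorm ((pinv A Γ).mulVec e)
      ≥ αl * (euclNorm (((colSub A (Λ \ Γ))ᵀ * (1 - colSub A Γ * pinv A Γ)
              * colSub A (Λ \ Γ)).mulVec fun j : ↥(Λ \ Γ) => xstar j.1)
          - euclNorm (((colSub A (Λ \ Γ))ᵀ
              * (1 - colSub A Γ * pinv A Γ)).mulVec e)) :=
  stable_point_condition_noise_general A e xstar Λ hΛ hΛcard hinv αl hαl Γ hΓcard b hb xb hsupp
    hgrad hmin
end

section
/- Descent inequality for constant-stepsize IHT: Let Ψ(x) = ½‖Ax − b‖², let 0 < α, and suppose ‖A(y − x)‖² ≤ (1 + U)‖y − x‖² for all vectors y − x with at most 2k nonzero entries, where U ≥ 0 satisfies α(1 + U) < 1. If x^m is k-sparse and x^{m+1} is the Euclidean projection of x^m − α∇Ψ(x^m) onto the k-sparse vectors, then Ψ(x^{m+1}) − Ψ(x^m) ≤ ((α(1+U) − 1)/(2α)) ‖x^{m+1} − x^m‖², and in particular ‖x^{m+1} − x^m‖² ≤ (2α/(1 − α(1+U))) (Ψ(x^m) − Ψ(x^{m+1})). -/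
open scoped Classical
open Finset Matrix

/-- descent inequality for constant-stepsize IHT under an
upper restricted isometry property of order `2k`. -/
theorem iht_descent {n N k : ℕ} (A : Matrix (Fin n) (Fin N) ℝ) (b : Fin n → ℝ)
    (α U : ℝ) (hα : 0 < α) (hU : 0 ≤ U) (hαU : α * (1 + U) < 1)
    (hRIP : ∀ z : Fin N → ℝ, (Finset.univ.filter fun i => z i ≠ 0).card ≤ 2 * k →
        ∑ i, (A.mulVec z i) ^ 2 ≤ (1 + U) * ∑ i, (z i) ^ 2)
    (xm xn : Fin N → ℝ)
    (hxm : (Finset.univ.filter fun i => xm i ≠ 0).card ≤ k)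
    (hxn : (Finset.univ.filter fun i => xn i ≠ 0).card ≤ k)
    (hproj : ∀ z : Fin N → ℝ, (Finset.univ.filter fun i => z i ≠ 0).card ≤ k →
        Real.sqrt (∑ i, (xn i - (xm i - α * Aᵀ.mulVec (A.mulVec xm - b) i)) ^ 2)
          ≤ Real.sqrt (∑ i, (z i - (xm i - α * Aᵀ.mulVec (A.mulVec xm - b) i)) ^ 2)) :
    ((1/2) * ∑ i, (A.mulVec xn i - b i) ^ 2 - (1/2) * ∑ i, (A.mulVec xm i - b i) ^ 2
        ≤ ((α * (1 + U) - 1) / (2 * α)) * ∑ i, (xn i - xm i) ^ 2) ∧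
    (∑ i, (xn i - xm i) ^ 2 ≤ (2 * α / (1 - α * (1 + U))) *
        ((1/2) * ∑ i, (A.mulVec xm i - b i) ^ 2
          - (1/2) * ∑ i, (A.mulVec xn i - b i) ^ 2)) := by
  set g : Fin N → ℝ := Aᵀ.mulVec (A.mulVec xm - b) with hg
  set d : Fin N → ℝ := xn - xm with hd
  have hdi : ∀ i, d i = xn i - xm i := fun i => rfl
  -- squared projection inequality with z = xm
  have hsq : ∑ i, (xn i - (xm i - α * g i)) ^ 2
      ≤ ∑ i, (xm i - (xm i - α * g i)) ^ 2 := by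
    have h := hproj xm hxm
    have h1 : (0:ℝ) ≤ ∑ i, (xn i - (xm i - α * g i)) ^ 2 :=
      Finset.sum_nonneg fun i _ => sq_nonneg _
    have h2 : (0:ℝ) ≤ ∑ i, (xm i - (xm i - α * g i)) ^ 2 :=
      Finset.sum_nonneg fun i _ => sq_nonneg _
    calc ∑ i, (xn i - (xm i - α * g i)) ^ 2
        = Real.sqrt (∑ i, (xn i - (xm i - α * g i)) ^ 2) ^ 2 := (Real.sq_sqrt h1).symm
      _ ≤ Real.sqrt (∑ i, (xm i - (xm i - α * g i)) ^ 2) ^ 2 := by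
          exact pow_le_pow_left₀ (Real.sqrt_nonneg _) h 2
      _ = ∑ i, (xm i - (xm i - α * g i)) ^ 2 := Real.sq_sqrt h2
  -- key : ∑ d² + 2α ∑ g*d ≤ 0
  have key : ∑ i, d i ^ 2 + 2 * α * ∑ i, g i * d i ≤ 0 := by
    have e1 : ∀ i ∈ Finset.univ, (xn i - (xm i - α * g i)) ^ 2
        = d i ^ 2 + 2 * α * (g i * d i) + α ^ 2 * g i ^ 2 := by
      intro i _; rw [hdi]; ring
    have e2 : ∀ i ∈ Finset.univ, (xm i - (xm i - α * g i)) ^ 2 = α ^ 2 * g i ^ 2 := by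
      intro i _; ring
    rw [Finset.sum_congr rfl e1, Finset.sum_congr rfl e2, Finset.sum_add_distrib,
      Finset.sum_add_distrib, ← Finset.mul_sum, ← Finset.mul_sum] at hsq
    linarith
  -- inner product identity : ∑ g*d = ∑ (Axm - b)*(Ad)
  have swap : ∑ i, g i * d i = ∑ j, (A.mulVec xm - b) j * (A.mulVec d) j := by
    have : (A.mulVec xm - b) ⬝ᵥ A.mulVec d = (A.mulVec xm - b) ᵥ* A ⬝ᵥ d :=
      Matrix.dotProduct_mulVec _ _ _
    rw [← Matrix.mulVec_transpose] at this
    simp only [dotProduct] at this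
    rw [← this]
  -- sparsity of d
  have hdsparse : (Finset.univ.filter fun i => d i ≠ 0).card ≤ 2 * k := by
    have hsub : (Finset.univ.filter fun i => d i ≠ 0)
        ⊆ (Finset.univ.filter fun i => xn i ≠ 0) ∪ (Finset.univ.filter fun i => xm i ≠ 0) := by
      intro i hi
      simp only [Finset.mem_filter, Finset.mem_union, Finset.mem_univ, true_and] at hi ⊢
      by_contra hc
      push_neg at hc
      exact hi (by rw [hdi, hc.1, hc.2]; ring)
    calc (Finset.univ.filter fun i => d i ≠ 0).card
        ≤ ((Finset.univ.filter fun i => xn i ≠ 0) ∪ (Finset.univ.filter fun i => xm i ≠ 0)).card :=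
          Finset.card_le_card hsub
      _ ≤ _ + _ := Finset.card_union_le _ _
      _ ≤ 2 * k := by omega
  have hrip := hRIP d hdsparse
  -- quadratic expansion of Ψ
  have expand : ∑ i, (A.mulVec xn i - b i) ^ 2
      = ∑ i, (A.mulVec xm i - b i) ^ 2 + 2 * ∑ j, (A.mulVec xm - b) j * (A.mulVec d) j
        + ∑ i, (A.mulVec d i) ^ 2 := by
    have hAd : ∀ j, A.mulVec xn j = A.mulVec xm j + A.mulVec d j := by
      intro j
      have : xn = xm + d := by funext i; simp [hdi]
      rw [this, Matrix.mulVec_add]; simp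
    have e : ∀ j ∈ Finset.univ, (A.mulVec xn j - b j) ^ 2
        = (A.mulVec xm j - b j) ^ 2 + 2 * ((A.mulVec xm - b) j * (A.mulVec d) j)
          + (A.mulVec d j) ^ 2 := by
      intro j _
      rw [hAd j]
      simp only [Pi.sub_apply]
      ring
    rw [Finset.sum_congr rfl e, Finset.sum_add_distrib, Finset.sum_add_distrib,
      ← Finset.mul_sum]
  have hd2 : (0:ℝ) ≤ ∑ i, d i ^ 2 := Finset.sum_nonneg fun i _ => sq_nonneg _
  have hdix : ∑ i, (xn i - xm i) ^ 2 = ∑ i, d i ^ 2 :=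
    Finset.sum_congr rfl fun i _ => by rw [hdi]
  have h2α : (0:ℝ) < 2 * α := by linarith
  have hpos : 0 < 1 - α * (1 + U) := by linarith
  have central : 2 * α * ((1/2) * ∑ i, (A.mulVec xn i - b i) ^ 2
      - (1/2) * ∑ i, (A.mulVec xm i - b i) ^ 2)
      ≤ (α * (1 + U) - 1) * ∑ i, d i ^ 2 := by
    nlinarith [key, hrip, expand, swap]
  constructor
  · rw [hdix, show ((α * (1 + U) - 1) / (2 * α)) * (∑ i, d i ^ 2)
        = ((α * (1 + U) - 1) * ∑ i, d i ^ 2) / (2 * α) from div_mul_eq_mul_div _ _ _,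
      le_div_iff₀ h2α]
    linarith [central]
  · rw [show (2 * α / (1 - α * (1 + U))) * ((1/2) * ∑ i, (A.mulVec xm i - b i) ^ 2
        - (1/2) * ∑ i, (A.mulVec xn i - b i) ^ 2)
        = (2 * α * ((1/2) * ∑ i, (A.mulVec xm i - b i) ^ 2
          - (1/2) * ∑ i, (A.mulVec xn i - b i) ^ 2)) / (1 - α * (1 + U))
        from div_mul_eq_mul_div _ _ _,
      le_div_iff₀ hpos]
    nlinarith [central, hdix]
end
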